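/- Let V be a real vector space, let P: V → V' be a linear map into the dual space with symmetric associated bilinear form (⟨Pω, η⟩ = ⟨Pη, ω⟩ for all ω, η ∈ V), and fix q₀ ∈ V'. Define q(ω) = q₀ + Pω and c(ω₀, ω₁) = (1/4)⟨ω₁ − ω₀, q(ω₀) + q(ω₁)⟩. Then c satisfies the cocycle condition c(ω₀, ω₂) = c(ω₀, ω₁) + c(ω₁, ω₂) for all ω₀, ω₁, ω₂ ∈ V. -/
import Mathlib


/-- Abstract cocycle property of the Q-curvature action: with `q(ω) = q₀ + Pω` for a symmetric
linear map `P : V → V'` and `c(ω₀, ω₁) = (1/4)⟨ω₁ − ω₀, q(ω₀) + q(ω₁)⟩`, one has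
`c(ω₀, ω₂) = c(ω₀, ω₁) + c(ω₁, ω₂)`. -/
theorem cocycle_condition {V : Type*} [AddCommGroup V] [Module ℝ V]
    (P : V →ₗ[ℝ] (V →ₗ[ℝ] ℝ)) (hP : ∀ ω η : V, P ω η = P η ω) (q₀ : V →ₗ[ℝ] ℝ)
    (q : V → (V →ₗ[ℝ] ℝ)) (hq : ∀ ω, q ω = q₀ + P ω)
    (c : V → V → ℝ) (hc : ∀ ω₀ ω₁, c ω₀ ω₁ = (1 / 4 : ℝ) * (q ω₀ + q ω₁) (ω₁ - ω₀)) :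
    ∀ ω₀ ω₁ ω₂ : V, c ω₀ ω₂ = c ω₀ ω₁ + c ω₁ ω₂ := by
  intro ω₀ ω₁ ω₂
  simp only [hc, hq]
  simp only [LinearMap.add_apply, map_sub, LinearMap.sub_apply]
  have h01 := hP ω₀ ω₁
  have h02 := hP ω₀ ω₂
  have h12 := hP ω₁ ω₂
  ring_nf
  linarith
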